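/- Every castle has an even number of reflex edges. -/

import Mathlib

/-!
Common definitions: orthogonal polyhedra in `ℝ³`, edges, reflex edges,
edge guards (closed and open), 2-reflex orthogonal polyhedra with their
canonical partition into bricks, contact rectangles, collars, primitive
contact rectangles, stacks, castles and double castles, prisms and
monotone orthogonal polyhedra.
-/

noncomputable section

/-- A point of `ℝ³`. -/
abbrev Pt : Type := Fin 3 → ℝ

/-- The closed axis-parallel box with opposite corners `lo` and `hi`. -/
def box (lo hi : Pt) : Set Pt := {x | ∀ i, lo i ≤ x i ∧ x i ≤ hi i}

/-- The closed segment determined by an (ordered) pair of points. -/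
def seg (e : Pt × Pt) : Set Pt := segment ℝ e.1 e.2

/-- A pair of points is horizontal if both have the same `z`-coordinate. -/
def Horizontal (e : Pt × Pt) : Prop := e.1 2 = e.2 2

/-- A point `p` of the region `S` near which `S` looks like a convex
(dihedral angle `π/2`) edge in direction `i`: in the two coordinate
directions orthogonal to `i`, the region is locally a quadrant. -/
def ConvexEdgePoint (S : Set Pt) (p : Pt) (i : Fin 3) : Prop :=
  ∃ ε > (0 : ℝ), ∃ j k : Fin 3, j ≠ i ∧ k ≠ i ∧ j ≠ k ∧ ∃ s t : ℝ,
    (s = 1 ∨ s = -1) ∧ (t = 1 ∨ t = -1) ∧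
    S ∩ Metric.ball p ε =
      {x ∈ Metric.ball p ε | 0 ≤ s * (x j - p j) ∧ 0 ≤ t * (x k - p k)}

/-- A point `p` of the region `S` near which `S` looks like a reflex
(dihedral angle `3π/2`) edge in direction `i`: in the two coordinate
directions orthogonal to `i`, the region is locally the complement of a
quadrant. -/
def ReflexEdgePoint (S : Set Pt) (p : Pt) (i : Fin 3) : Prop :=
  ∃ ε > (0 : ℝ), ∃ j k : Fin 3, j ≠ i ∧ k ≠ i ∧ j ≠ k ∧ ∃ s t : ℝ,
    (s = 1 ∨ s = -1) ∧ (t = 1 ∨ t = -1) ∧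
    S ∩ Metric.ball p ε =
      {x ∈ Metric.ball p ε | 0 ≤ s * (x j - p j) ∨ 0 ≤ t * (x k - p k)}

/-- A finite set `G` of *closed edge guards* guards the region `S`:
every point of `S` is seen by some point of some guard, where a point
`p` sees `q` if the closed segment from `p` to `q` lies in `S`. -/
def GuardsClosed (S : Set Pt) (G : Finset (Pt × Pt)) : Prop :=
  ∀ q ∈ S, ∃ e ∈ G, ∃ p ∈ segment ℝ e.1 e.2, segment ℝ p q ⊆ S

/-- A finite set `G` of *open edge guards* guards the region `S`:
every point of `S` is seen by some point of some guard, where guard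
points range over the open segment (the edge minus its endpoints). -/
def GuardsOpen (S : Set Pt) (G : Finset (Pt × Pt)) : Prop :=
  ∀ q ∈ S, ∃ e ∈ G, ∃ p ∈ openSegment ℝ e.1 e.2, segment ℝ p q ⊆ S

/-- An **orthogonal polyhedron**: a connected finite union of
nondegenerate axis-parallel boxes in `ℝ³`, which is regular closed,
together with its edges (maximal axis-parallel segments of the boundary
where two non-coplanar faces meet), the subset of reflex edges (those
with interior dihedral angle `3π/2`, as opposed to convex edges with
angle `π/2`), and the genus of its boundary surface. -/
structure OrthoPolyhedron where
  /-- The solid region occupied by the polyhedron. -/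
  carrier : Set Pt
  /-- A finite family of boxes (given by pairs of opposite corners) whose union is the polyhedron. -/
  boxes : Finset (Pt × Pt)
  boxes_nonempty : boxes.Nonempty
  boxes_proper : ∀ B ∈ boxes, ∀ i, B.1 i < B.2 i
  carrier_eq : carrier = ⋃ B ∈ boxes, box B.1 B.2
  carrier_connected : IsConnected carrier
  carrier_regular : carrier = closure (interior carrier)
  /-- The edges of the polyhedron, each given by its pair of endpoints. -/
  edges : Finset (Pt × Pt)
  /-- The reflex edges of the polyhedron. -/
  reflexEdges : Finset (Pt × Pt)
  reflex_subset : reflexEdges ⊆ edges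
  edges_nondegenerate : ∀ e ∈ edges, e.1 ≠ e.2
  edges_boundary : ∀ e ∈ edges, seg e ⊆ frontier carrier
  /-- Each edge is axis-parallel; points in its relative interior are reflex
  edge points if the edge is reflex, and convex edge points otherwise. -/
  edges_classified : ∀ e ∈ edges, ∃ i : Fin 3,
    (∀ j, j ≠ i → e.1 j = e.2 j) ∧
    ∀ p ∈ openSegment ℝ e.1 e.2,
      (e ∈ reflexEdges → ReflexEdgePoint carrier p i) ∧
      (e ∉ reflexEdges → ConvexEdgePoint carrier p i)
  /-- Every edge point of the boundary lies on some listed edge. -/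
  edges_complete : ∀ p : Pt, ∀ i : Fin 3,
    (ConvexEdgePoint carrier p i ∨ ReflexEdgePoint carrier p i) →
    ∃ e ∈ edges, p ∈ seg e
  /-- Distinct listed edges are distinct maximal segments: they share at most one point. -/
  edges_maximal : ∀ e ∈ edges, ∀ f ∈ edges, e ≠ f → (seg e ∩ seg f).Subsingleton
  /-- The genus of the boundary surface of the polyhedron. -/
  genus : ℕ

/-- A set of `ℝ³` is a **prism**: the extrusion of a plane figure along one
of the coordinate directions. -/
def IsPrismSet (S : Set Pt) : Prop :=
  ∃ i : Fin 3, ∃ a b : ℝ, a < b ∧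
    (∀ x ∈ S, a ≤ x i ∧ x i ≤ b) ∧
    (∀ x ∈ S, ∀ t : ℝ, a ≤ t → t ≤ b → Function.update x i t ∈ S)

/-- A **monotone orthogonal polyhedron**: a prism whose intersection with
every vertical line is empty or a single segment (i.e. convex). -/
def OrthoPolyhedron.IsMonotone (P : OrthoPolyhedron) : Prop :=
  IsPrismSet P.carrier ∧
    ∀ a b : ℝ, Convex ℝ (P.carrier ∩ {x : Pt | x 0 = a ∧ x 1 = b})

/-- A **2-reflex orthogonal polyhedron**: an orthogonal polyhedron whose
reflex edges lie in at most two directions; without loss of generality all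
of them are horizontal (and hence, being axis-parallel, lie in the two
horizontal coordinate directions).  It comes with its canonical partition
into **bricks**: maximal cuboids, any two of which are disjoint or touch
at their top/bottom faces. -/
structure TwoReflexPolyhedron extends OrthoPolyhedron where
  reflex_horizontal : ∀ e ∈ reflexEdges, Horizontal e
  /-- The bricks of the canonical partition, each given by a pair of opposite corners. -/
  bricks : Finset (Pt × Pt)
  bricks_proper : ∀ B ∈ bricks, ∀ i, B.1 i < B.2 i
  bricks_cover : carrier = ⋃ B ∈ bricks, box B.1 B.2
  bricks_disjoint : ∀ B ∈ bricks, ∀ B' ∈ bricks, B ≠ B' →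
    interior (box B.1 B.2) ∩ interior (box B'.1 B'.2) = ∅
  bricks_contact : ∀ B ∈ bricks, ∀ B' ∈ bricks, B ≠ B' →
    box B.1 B.2 ∩ box B'.1 B'.2 = ∅ ∨ B.2 2 = B'.1 2 ∨ B'.2 2 = B.1 2

/-- The corner of a horizontal rectangle `R` adjacent to `R.1` in the `x`-direction. -/
def corner10 (R : Pt × Pt) : Pt := fun i => if i = 0 then R.2 0 else R.1 i

/-- The corner of a horizontal rectangle `R` adjacent to `R.1` in the `y`-direction. -/
def corner01 (R : Pt × Pt) : Pt := fun i => if i = 1 then R.2 1 else R.1 i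

/-- A nondegenerate horizontal rectangle, given by two opposite corners. -/
def IsHorizRect (R : Pt × Pt) : Prop :=
  R.1 0 < R.2 0 ∧ R.1 1 < R.2 1 ∧ R.1 2 = R.2 2

/-- The boundary of a horizontal rectangle: the union of its four sides. -/
def rectBoundary (R : Pt × Pt) : Set Pt :=
  segment ℝ R.1 (corner10 R) ∪ segment ℝ (corner10 R) R.2 ∪
    segment ℝ (corner01 R) R.2 ∪ segment ℝ R.1 (corner01 R)

namespace TwoReflexPolyhedron

variable (P : TwoReflexPolyhedron)

/-- Brick `B'` is attached to the top face of brick `B` (along a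
two-dimensional horizontal contact rectangle). -/
def AttachedAbove (B B' : Pt × Pt) : Prop :=
  B ∈ P.bricks ∧ B' ∈ P.bricks ∧ B ≠ B' ∧ B.2 2 = B'.1 2 ∧
    ∃ R : Pt × Pt, IsHorizRect R ∧ box R.1 R.2 = box B.1 B.2 ∩ box B'.1 B'.2

/-- `R` is a **contact rectangle** of the polyhedron: the (two-dimensional,
horizontal) intersection of two adjacent bricks. -/
def IsContactRect (R : Pt × Pt) : Prop :=
  IsHorizRect R ∧ ∃ B B' : Pt × Pt, P.AttachedAbove B B' ∧
    box R.1 R.2 = box B.1 B.2 ∩ box B'.1 B'.2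

/-- The polyhedron has a reflex edge with endpoints `a` and `b`. -/
def HasReflexEdge (a b : Pt) : Prop :=
  ∃ e ∈ P.reflexEdges, seg e = segment ℝ a b

/-- A **collar**: a contact rectangle whose boundary consists of four
reflex edges of the polyhedron. -/
def IsCollar (R : Pt × Pt) : Prop :=
  P.IsContactRect R ∧
    P.HasReflexEdge R.1 (corner10 R) ∧ P.HasReflexEdge (corner10 R) R.2 ∧
    P.HasReflexEdge (corner01 R) R.2 ∧ P.HasReflexEdge R.1 (corner01 R)

/-- The number of collars of the polyhedron. -/
def numCollars : ℕ := {R : Pt × Pt | P.IsCollar R}.ncard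

/-- A contact rectangle is **primitive** if exactly one reflex edge of the
polyhedron lies on its boundary. -/
def IsPrimitive (R : Pt × Pt) : Prop :=
  P.IsContactRect R ∧
    {e ∈ (↑P.reflexEdges : Set (Pt × Pt)) | seg e ⊆ rectBoundary R}.ncard = 1

/-- A **stack**: a 2-reflex orthogonal polyhedron all of whose contact
rectangles are primitive. -/
def IsStack : Prop := ∀ R : Pt × Pt, P.IsContactRect R → P.IsPrimitive R

/-- The set of bricks `S` forms a **castle** with base brick `base`: every
brick of `S` has zero or two bricks of `S` attached to its top face, and
every brick of `S` other than `base` has exactly one brick of `S` attached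
to its bottom face, while `base` has none. -/
def CastleOn (S : Set (Pt × Pt)) (base : Pt × Pt) : Prop :=
  base ∈ S ∧ S ⊆ ↑P.bricks ∧
    (∀ B ∈ S, {B' ∈ S | P.AttachedAbove B B'}.ncard = 0 ∨
      {B' ∈ S | P.AttachedAbove B B'}.ncard = 2) ∧
    (∀ B ∈ S, B ≠ base → {B' ∈ S | P.AttachedAbove B' B}.ncard = 1) ∧
    {B' ∈ S | P.AttachedAbove B' base}.ncard = 0

/-- The set of bricks `S` forms an **upside-down castle** with base brick
`base` (its topmost brick). -/
def CastleOnDown (S : Set (Pt × Pt)) (base : Pt × Pt) : Prop :=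
  base ∈ S ∧ S ⊆ ↑P.bricks ∧
    (∀ B ∈ S, {B' ∈ S | P.AttachedAbove B' B}.ncard = 0 ∨
      {B' ∈ S | P.AttachedAbove B' B}.ncard = 2) ∧
    (∀ B ∈ S, B ≠ base → {B' ∈ S | P.AttachedAbove B B'}.ncard = 1) ∧
    {B' ∈ S | P.AttachedAbove base B'}.ncard = 0

/-- A **castle**: a stack whose brick set forms a castle. -/
def IsCastle : Prop := P.IsStack ∧ ∃ base : Pt × Pt, P.CastleOn ↑P.bricks base

/-- A **double castle**: a stack obtained by attaching the base brick of an
upside-down castle to the base brick of a castle via a primitive contact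
rectangle. -/
def IsDoubleCastle : Prop :=
  P.IsStack ∧ ∃ (S₁ S₂ : Set (Pt × Pt)) (b₁ b₂ : Pt × Pt),
    S₁ ∪ S₂ = ↑P.bricks ∧ Disjoint S₁ S₂ ∧
    P.CastleOnDown S₁ b₁ ∧ P.CastleOn S₂ b₂ ∧ P.AttachedAbove b₁ b₂

end TwoReflexPolyhedron

/-!
Count the pairs `(B, B')` of bricks with `B'` attached to the top face of `B`. In a castle every
brick carries zero or two bricks, so there is an even number of such pairs. In a stack they are
in bijection with the reflex edges: the contact rectangle of a pair carries exactly one reflex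
edge, and conversely a (horizontal) reflex edge is where the top face of the brick below it meets
the bottom face of the brick above it, so it lies on the boundary of exactly one contact
rectangle. That last fact is local: near a point of the edge the carrier is the union of the
bricks through the point, and matching their tangent cones against the reflex model
`{0 ≤ σ x_j} ∪ {0 ≤ τ x_z}` singles out the two bricks.
-/

open Set Filter Topology

lemma box_eq_Icc (lo hi : Pt) : box lo hi = Icc lo hi := by
  ext x
  simp [box, Pi.le_def, forall_and]

lemma IsHorizRect.le {R : Pt × Pt} (hR : IsHorizRect R) : R.1 ≤ R.2 := fun m ↦ by
  fin_cases m
  exacts [hR.1.le, hR.2.1.le, hR.2.2.le]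

lemma eq_or_eq_or_eq_two {i j : Fin 3} (hi : i ≠ 2) (hj : j ≠ 2) (hji : j ≠ i) (m : Fin 3) :
    m = i ∨ m = j ∨ m = 2 := by
  revert i j m
  decide

lemma apply_eq_of_mem_segment {a b x : Pt} {m : Fin 3} (hx : x ∈ segment ℝ a b)
    (hab : a m = b m) : x m = a m := by
  obtain ⟨s, t, -, -, hst, rfl⟩ := hx
  simp only [Pi.add_apply, Pi.smul_apply, smul_eq_mul, ← hab, ← add_mul, hst, one_mul]

lemma exists_mem_openSegment_apply_eq {a b : Pt} {m : Fin 3} {y : ℝ}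
    (hy : y ∈ openSegment ℝ (a m) (b m)) : ∃ x ∈ openSegment ℝ a b, x m = y := by
  obtain ⟨s, t, hs, ht, hst, rfl⟩ := hy
  exact ⟨s • a + t • b, ⟨s, t, hs, ht, hst, rfl⟩, rfl⟩

lemma apply_mem_openSegment {a b x : Pt} (hx : x ∈ openSegment ℝ a b) (m : Fin 3) :
    x m ∈ openSegment ℝ (a m) (b m) := by
  obtain ⟨s, t, hs, ht, hst, rfl⟩ := hx
  exact ⟨s, t, hs, ht, hst, rfl⟩

lemma mem_segment_of_eq_off {a b x : Pt} (n : Fin 3) (hab : ∀ m ≠ n, a m = b m)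
    (hxa : ∀ m ≠ n, x m = a m) (ha : a n ≤ x n) (hb : x n ≤ b n) :
    x ∈ segment ℝ a b := by
  obtain ⟨t, ht, hxt⟩ : ∃ t ∈ Icc (0 : ℝ) 1, x n = a n + t * (b n - a n) := by
    rcases ha.eq_or_lt with h | h
    · exact ⟨0, left_mem_Icc.2 zero_le_one, by simp [h]⟩
    · have hd : 0 < b n - a n := by linarith
      refine ⟨(x n - a n) / (b n - a n), ⟨by positivity, ?_⟩, by field_simp; ring⟩
      rw [div_le_one hd]
      linarith
  rw [segment_eq_image']
  refine ⟨t, ht, funext fun m => ?_⟩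
  by_cases hm : m = n
  · subst hm
    simp [hxt]
  · simp [hxa m hm, hab m hm]

lemma mem_rectBoundary_of_mem_box {R : Pt × Pt} {x : Pt} (hR : R.1 2 = R.2 2)
    (hx : x ∈ box R.1 R.2) {j : Fin 3} (hj : j ≠ 2) (hside : x j = R.1 j ∨ x j = R.2 j) :
    x ∈ rectBoundary R := by
  have hx2 : x 2 = R.1 2 := le_antisymm (hR ▸ (hx 2).2) (hx 2).1
  have hj01 : ∀ j : Fin 3, j ≠ 2 → j = 0 ∨ j = 1 := by decide
  simp only [rectBoundary, mem_union]
  obtain rfl | rfl := hj01 j hj <;> rcases hside with h | h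
  · refine .inr (mem_segment_of_eq_off 1 ?_ ?_ (hx 1).1 (by simpa [corner01] using (hx 1).2)) <;>
      intro m hm <;> fin_cases m <;> simp_all [corner01]
  · refine .inl (.inl (.inr (mem_segment_of_eq_off 1 ?_ ?_ (by simpa [corner10] using (hx 1).1)
      (hx 1).2))) <;> intro m hm <;> fin_cases m <;> simp_all [corner10]
  · refine .inl (.inl (.inl (mem_segment_of_eq_off 0 ?_ ?_ (hx 0).1
      (by simpa [corner10] using (hx 0).2)))) <;> intro m hm <;> fin_cases m <;> simp_all [corner10]
  · refine .inl (.inr (mem_segment_of_eq_off 0 ?_ ?_ (by simpa [corner01] using (hx 0).1)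
      (hx 0).2)) <;> intro m hm <;> fin_cases m <;> simp_all [corner01]

lemma rectBoundary_subset_box {R : Pt × Pt} (hR : R.1 ≤ R.2) :
    rectBoundary R ⊆ box R.1 R.2 := by
  rw [box_eq_Icc]
  have hc10 : corner10 R ∈ Icc R.1 R.2 := by
    rw [← box_eq_Icc]
    intro m
    by_cases hm : m = 0 <;> simp [corner10, hm, hR m, hR 0]
  have hc01 : corner01 R ∈ Icc R.1 R.2 := by
    rw [← box_eq_Icc]
    intro m
    by_cases hm : m = 1 <;> simp [corner01, hm, hR m, hR 1]
  have hconv := convex_Icc (𝕜 := ℝ) R.1 R.2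
  simp only [rectBoundary, union_subset_iff]
  exact ⟨⟨⟨hconv.segment_subset (left_mem_Icc.2 hR) hc10,
    hconv.segment_subset hc10 (right_mem_Icc.2 hR)⟩,
    hconv.segment_subset hc01 (right_mem_Icc.2 hR)⟩,
    hconv.segment_subset (left_mem_Icc.2 hR) hc01⟩

lemma segment_subset_Icc_of_forall_mem_Icc_imp_mem_Ioo {a b y L U : ℝ}
    (hy : y ∈ openSegment ℝ a b) (hyLU : y ∈ Icc L U)
    (h : ∀ x ∈ openSegment ℝ a b, x ∈ Icc L U → x ∈ Ioo L U) :
    segment ℝ a b ⊆ Icc L U := by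
  wlog hab : a ≤ b generalizing a b
  · rw [segment_symm]
    rw [openSegment_symm] at hy h
    exact this hy h (le_of_not_ge hab)
  rcases hab.eq_or_lt with rfl | hab
  · simp only [openSegment_same, mem_singleton_iff] at hy
    simpa [hy] using hyLU
  rw [openSegment_eq_Ioo hab] at hy h
  rw [segment_eq_Icc hab.le]
  refine Icc_subset_Icc (not_lt.1 fun haL ↦ ?_) (not_lt.1 fun hUb ↦ ?_)
  · exact (h L ⟨haL, hyLU.1.trans_lt hy.2⟩ ⟨le_rfl, hyLU.1.trans hyLU.2⟩).1.false
  · exact (h U ⟨hy.1.trans_le hyLU.2, hUb⟩ ⟨hyLU.1.trans hyLU.2, le_rfl⟩).2.false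

lemma segment_subset_box_of_forall_mem_box_imp {a b p : Pt} {R : Pt × Pt} {i : Fin 3}
    (hab : ∀ m ≠ i, a m = b m) (hp : p ∈ openSegment ℝ a b) (hpR : p ∈ box R.1 R.2)
    (h : ∀ q ∈ openSegment ℝ a b, q ∈ box R.1 R.2 → R.1 i < q i ∧ q i < R.2 i) :
    segment ℝ a b ⊆ box R.1 R.2 := by
  have hiff : ∀ x ∈ segment ℝ a b, x ∈ box R.1 R.2 ↔ x i ∈ Icc (R.1 i) (R.2 i) := by
    refine fun x hx ↦ ⟨fun hxR ↦ hxR i, fun hxi m ↦ ?_⟩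
    by_cases hm : m = i
    · exact hm ▸ hxi
    · have hpm := apply_eq_of_mem_segment (openSegment_subset_segment ℝ _ _ hp) (hab m hm)
      rw [apply_eq_of_mem_segment hx (hab m hm), ← hpm]
      exact hpR m
  have hIcc : segment ℝ (a i) (b i) ⊆ Icc (R.1 i) (R.2 i) := by
    refine segment_subset_Icc_of_forall_mem_Icc_imp_mem_Ioo (apply_mem_openSegment hp i)
      (hpR i) fun y hy hyR ↦ ?_
    obtain ⟨q, hq, rfl⟩ := exists_mem_openSegment_apply_eq hy
    exact h q hq ((hiff q (openSegment_subset_segment ℝ _ _ hq)).2 hyR)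
  rw [box_eq_Icc]
  refine (convex_Icc (𝕜 := ℝ) _ _).segment_subset ?_ ?_ <;> rw [← box_eq_Icc]
  · exact (hiff a (left_mem_segment ℝ _ _)).2 (hIcc (left_mem_segment ℝ _ _))
  · exact (hiff b (right_mem_segment ℝ _ _)).2 (hIcc (right_mem_segment ℝ _ _))

def contactRect (B B' : Pt × Pt) : Pt × Pt := (B.1 ⊔ B'.1, B.2 ⊓ B'.2)

lemma box_contactRect (B B' : Pt × Pt) :
    box (contactRect B B').1 (contactRect B B').2 = box B.1 B.2 ∩ box B'.1 B'.2 := by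
  simp only [contactRect, box_eq_Icc, Icc_inter_Icc]

lemma eventually_mem_biUnion_iff {X ι : Type*} [TopologicalSpace X] {s : Finset ι}
    {f : ι → Set X} (hf : ∀ i ∈ s, IsClosed (f i)) (p : X) :
    ∀ᶠ x in 𝓝 p, (x ∈ ⋃ i ∈ s, f i ↔ ∃ i ∈ s, p ∈ f i ∧ x ∈ f i) := by
  classical
  have hfar : IsClosed (⋃ i ∈ s.filter (p ∉ f ·), f i) :=
    isClosed_biUnion_finset fun i hi ↦ hf i (Finset.mem_filter.1 hi).1
  filter_upwards [hfar.isOpen_compl.mem_nhds (by simp)] with x hx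
  simp only [mem_compl_iff, mem_iUnion, Finset.mem_filter, exists_prop, not_exists,
    not_and] at hx
  simp only [mem_iUnion, exists_prop]
  exact ⟨fun ⟨i, hi, hxi⟩ ↦ ⟨i, hi, not_not.1 fun hpi ↦ hx i ⟨hi, hpi⟩ hxi, hxi⟩,
    fun ⟨i, hi, _, hxi⟩ ↦ ⟨i, hi, hxi⟩⟩

/-- The tangent cone of `box K.1 K.2` at `p` is `{v | ∀ m, OpensToward K p m (v m)}`. -/
def OpensToward (K : Pt × Pt) (p : Pt) (m : Fin 3) (a : ℝ) : Prop :=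
  (a < 0 → K.1 m < p m) ∧ (0 < a → p m < K.2 m)

lemma opensToward_zero (K : Pt × Pt) (p : Pt) (m : Fin 3) : OpensToward K p m 0 :=
  ⟨fun h ↦ (lt_irrefl _ h).elim, fun h ↦ (lt_irrefl _ h).elim⟩

lemma opensToward_of_lt_of_lt {K : Pt × Pt} {p : Pt} {m : Fin 3} (h₁ : K.1 m < p m)
    (h₂ : p m < K.2 m) (a : ℝ) : OpensToward K p m a :=
  ⟨fun _ ↦ h₁, fun _ ↦ h₂⟩

lemma opensToward_of_add_smul_mem {K : Pt × Pt} {p v : Pt} {t : ℝ} (ht : 0 < t)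
    (h : p + t • v ∈ box K.1 K.2) (m : Fin 3) : OpensToward K p m (v m) := by
  have hm := h m
  simp only [Pi.add_apply, Pi.smul_apply, smul_eq_mul] at hm
  constructor <;> intro hv <;> nlinarith [hm.1, hm.2]

lemma eventually_add_smul_mem_box {K : Pt × Pt} {p v : Pt} (hp : p ∈ box K.1 K.2)
    (hv : ∀ m, OpensToward K p m (v m)) : ∀ᶠ t in 𝓝[>] (0 : ℝ), p + t • v ∈ box K.1 K.2 := by
  simp only [box, mem_ofPred_eq, Pi.add_apply, Pi.smul_apply, smul_eq_mul, eventually_all]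
  intro m
  have hlim : Tendsto (fun t : ℝ ↦ p m + t * v m) (𝓝[>] 0) (𝓝 (p m)) :=
    tendsto_nhdsWithin_of_tendsto_nhds <| Continuous.tendsto' (by fun_prop) _ _ (by simp)
  have hpos : ∀ᶠ t in 𝓝[>] (0 : ℝ), 0 < t := self_mem_nhdsWithin
  refine .and ?_ ?_
  · rcases (hp m).1.lt_or_eq with h | h
    · exact (hlim.eventually (eventually_gt_nhds h)).mono fun _ ↦ le_of_lt
    · have : 0 ≤ v m := not_lt.1 fun hneg ↦ ((hv m).1 hneg).ne h
      filter_upwards [hpos] with t ht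
      nlinarith
  · rcases (hp m).2.lt_or_eq with h | h
    · exact (hlim.eventually (eventually_lt_nhds h)).mono fun _ ↦ le_of_lt
    · have : v m ≤ 0 := not_lt.1 fun hpos ↦ ((hv m).2 hpos).ne h
      filter_upwards [hpos] with t ht
      nlinarith

lemma sup_lt_inf_of_opensToward {B C : Pt × Pt} {p : Pt} {j : Fin 3} {σ : ℝ} (hσ : σ ≠ 0)
    (hpB : p ∈ box B.1 B.2) (hpC : p ∈ box C.1 C.2)
    (hB : OpensToward B p j σ) (hC : OpensToward C p j σ) : (B.1 ⊔ C.1) j < (B.2 ⊓ C.2) j := by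
  simp only [Pi.sup_apply, Pi.inf_apply]
  rcases hσ.lt_or_gt with hσ | hσ
  · exact (max_lt (hB.1 hσ) (hC.1 hσ)).trans_le (le_min (hpB j).2 (hpC j).2)
  · exact (max_le (hpB j).1 (hpC j).1).trans_lt (lt_min (hB.2 hσ) (hC.2 hσ))

lemma ReflexEdgePoint.eventually_mem_iff {S : Set Pt} {p : Pt} {i : Fin 3} (hi : i ≠ 2)
    (h : ReflexEdgePoint S p i) :
    ∃ j, j ≠ i ∧ j ≠ 2 ∧ ∃ σ τ : ℝ, σ ≠ 0 ∧ τ ≠ 0 ∧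
      ∀ᶠ x in 𝓝 p, (x ∈ S ↔ 0 ≤ σ * (x j - p j) ∨ 0 ≤ τ * (x 2 - p 2)) := by
  obtain ⟨ε, hε, j, k, hji, hki, hjk, s, t, hs, ht, heq⟩ := h
  have hs0 : s ≠ 0 := by rcases hs with rfl | rfl <;> norm_num
  have ht0 : t ≠ 0 := by rcases ht with rfl | rfl <;> norm_num
  have hloc : ∀ᶠ x in 𝓝 p, (x ∈ S ↔ 0 ≤ s * (x j - p j) ∨ 0 ≤ t * (x k - p k)) := by
    filter_upwards [Metric.ball_mem_nhds p hε] with x hx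
    simpa [Metric.mem_ball.1 hx] using congrArg (x ∈ ·) heq
  have hjk2 : ∀ i j k : Fin 3, i ≠ 2 → j ≠ i → k ≠ i → j ≠ k → j = 2 ∨ k = 2 := by decide
  rcases hjk2 i j k hi hji hki hjk with rfl | rfl
  · exact ⟨k, hki, hjk.symm, t, s, ht0, hs0, hloc.mono fun x hx ↦ hx.trans or_comm⟩
  · exact ⟨j, hji, hjk, s, t, hs0, ht0, hloc⟩

namespace TwoReflexPolyhedron

section Bricks

variable (P : TwoReflexPolyhedron)

lemma brick_eq_of_bottom_lt {B C : Pt × Pt} (hB : B ∈ P.bricks) (hC : C ∈ P.bricks) {x : Pt}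
    (hxB : x ∈ box B.1 B.2) (hxC : x ∈ box C.1 C.2) (hB2 : B.1 2 < x 2) (hC2 : C.1 2 < x 2) :
    B = C := by
  by_contra hne
  rcases P.bricks_contact B hB C hC hne with hemp | h | h
  · exact (eq_empty_iff_forall_notMem.1 hemp) x ⟨hxB, hxC⟩
  · linarith [(hxB 2).2]
  · linarith [(hxC 2).2]

lemma brick_eq_of_lt_top {B C : Pt × Pt} (hB : B ∈ P.bricks) (hC : C ∈ P.bricks) {x : Pt}
    (hxB : x ∈ box B.1 B.2) (hxC : x ∈ box C.1 C.2) (hB2 : x 2 < B.2 2) (hC2 : x 2 < C.2 2) :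
    B = C := by
  by_contra hne
  rcases P.bricks_contact B hB C hC hne with hemp | h | h
  · exact (eq_empty_iff_forall_notMem.1 hemp) x ⟨hxB, hxC⟩
  · linarith [(hxC 2).1]
  · linarith [(hxB 2).1]

lemma eq_and_eq_of_mem_inter {B B' C C' : Pt × Pt} (hB : B ∈ P.bricks) (hB' : B' ∈ P.bricks)
    (hC : C ∈ P.bricks) (hC' : C' ∈ P.bricks) (hBB' : B.2 2 = B'.1 2) (hCC' : C.2 2 = C'.1 2)
    {x : Pt} (hxB : x ∈ box B.1 B.2 ∩ box B'.1 B'.2) (hxC : x ∈ box C.1 C.2 ∩ box C'.1 C'.2) :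
    B = C ∧ B' = C' := by
  have hxB2 : x 2 = B.2 2 := le_antisymm (hxB.1 2).2 (hBB' ▸ (hxB.2 2).1)
  have hxC2 : x 2 = C.2 2 := le_antisymm (hxC.1 2).2 (hCC' ▸ (hxC.2 2).1)
  exact ⟨P.brick_eq_of_bottom_lt hB hC hxB.1 hxC.1 (hxB2 ▸ P.bricks_proper B hB 2)
      (hxC2 ▸ P.bricks_proper C hC 2),
    P.brick_eq_of_lt_top hB' hC' hxB.2 hxC.2 (hxB2 ▸ hBB' ▸ P.bricks_proper B' hB' 2)
      (hxC2 ▸ hCC' ▸ P.bricks_proper C' hC' 2)⟩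

lemma brick_eq_of_opensToward_vertical {B C : Pt × Pt} (hB : B ∈ P.bricks) (hC : C ∈ P.bricks)
    {x : Pt} (hxB : x ∈ box B.1 B.2) (hxC : x ∈ box C.1 C.2) {s : ℝ} (hs : s ≠ 0)
    (hBs : OpensToward B x 2 s) (hCs : OpensToward C x 2 s) : B = C := by
  rcases hs.lt_or_gt with hs | hs
  · exact P.brick_eq_of_bottom_lt hB hC hxB hxC (hBs.1 hs) (hCs.1 hs)
  · exact P.brick_eq_of_lt_top hB hC hxB hxC (hBs.2 hs) (hCs.2 hs)

lemma eventually_mem_carrier_iff (p : Pt) :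
    ∀ᶠ x in 𝓝 p, (x ∈ P.carrier ↔ ∃ K ∈ P.bricks, p ∈ box K.1 K.2 ∧ x ∈ box K.1 K.2) := by
  rw [P.bricks_cover]
  exact eventually_mem_biUnion_iff (fun K _ ↦ by rw [box_eq_Icc]; exact isClosed_Icc) p

/-- Near `p` the carrier is a union of boxes through `p`, so a description of it near `p` by a
cone `c` with apex `p` is the union of the tangent cones of these boxes at `p`. -/
lemma cone_iff_exists_brick {p : Pt} {c : Pt → Prop} (hc : ∀ t : ℝ, 0 < t → ∀ v, c (t • v) ↔ c v)
    (hS : ∀ᶠ x in 𝓝 p, (x ∈ P.carrier ↔ c (x - p))) (v : Pt) :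
    c v ↔ ∃ K ∈ P.bricks, p ∈ box K.1 K.2 ∧ ∀ m, OpensToward K p m (v m) := by
  have hray : Tendsto (fun t : ℝ ↦ p + t • v) (𝓝[>] 0) (𝓝 p) :=
    tendsto_nhdsWithin_of_tendsto_nhds <| Continuous.tendsto' (by fun_prop) _ _ (by simp)
  have hloc : ∀ᶠ t in 𝓝[>] (0 : ℝ), 0 < t ∧
      (c v ↔ ∃ K ∈ P.bricks, p ∈ box K.1 K.2 ∧ p + t • v ∈ box K.1 K.2) := by
    filter_upwards [self_mem_nhdsWithin, hray.eventually (hS.and (P.eventually_mem_carrier_iff p))]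
      with t (ht : 0 < t) ⟨h₁, h₂⟩
    rw [← hc t ht, ← h₂, h₁, add_sub_cancel_left]
    exact ⟨ht, .rfl⟩
  constructor
  · intro hv
    obtain ⟨t, ht, hiff⟩ := hloc.exists
    obtain ⟨K, hK, hpK, hK'⟩ := hiff.1 hv
    exact ⟨K, hK, hpK, opensToward_of_add_smul_mem ht hK'⟩
  · rintro ⟨K, hK, hpK, hKv⟩
    obtain ⟨t, ⟨ht, hiff⟩, htK⟩ := (hloc.and (eventually_add_smul_mem_box hpK hKv)).exists
    exact hiff.2 ⟨K, hK, hpK, htK⟩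

end Bricks

variable {P : TwoReflexPolyhedron}

/-- `(a, b, c)` are the components of a direction along the edge, across it and vertically; the
left-hand side is the reflex model of the carrier at `p`. -/
lemma exists_reflexCone {p : Pt} {i : Fin 3} (hi : i ≠ 2)
    (hp : ReflexEdgePoint P.carrier p i) :
    ∃ j, j ≠ i ∧ j ≠ 2 ∧ ∃ σ τ : ℝ, σ ≠ 0 ∧ τ ≠ 0 ∧ ∀ a b c : ℝ,
      (0 ≤ σ * b ∨ 0 ≤ τ * c) ↔ ∃ K ∈ P.bricks, p ∈ box K.1 K.2 ∧
        OpensToward K p i a ∧ OpensToward K p j b ∧ OpensToward K p 2 c := by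
  obtain ⟨j, hji, hj2, σ, τ, hσ, hτ, hloc⟩ := hp.eventually_mem_iff hi
  refine ⟨j, hji, hj2, σ, τ, hσ, hτ, fun a b c ↦ ?_⟩
  have hcone := P.cone_iff_exists_brick (c := fun v ↦ 0 ≤ σ * v j ∨ 0 ≤ τ * v 2)
    (fun t ht v ↦ by simp only [Pi.smul_apply, smul_eq_mul, mul_left_comm _ t,
      mul_nonneg_iff_of_pos_left ht])
    (by simpa using hloc) (fun m ↦ if m = i then a else if m = j then b else c)
  simp only [hji, hi.symm, hj2.symm, if_true, if_false] at hcone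
  refine hcone.trans (exists_congr fun K ↦ and_congr_right fun _ ↦ and_congr_right fun _ ↦
    ⟨fun h ↦ ?_, ?_⟩)
  · simpa [hji, hi.symm, hj2.symm] using And.intro (h i) (And.intro (h j) (h 2))
  · rintro ⟨hi', hj', h2'⟩ m
    rcases eq_or_eq_or_eq_two hi hj2 hji m with rfl | rfl | rfl <;> simpa [hji, hi.symm, hj2.symm]

section ReflexCone

variable {p : Pt} {i j : Fin 3} {σ τ : ℝ}
  (hcone : ∀ a b c : ℝ, (0 ≤ σ * b ∨ 0 ≤ τ * c) ↔ ∃ K ∈ P.bricks, p ∈ box K.1 K.2 ∧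
    OpensToward K p i a ∧ OpensToward K p j b ∧ OpensToward K p 2 c)
include hcone

lemma exists_brick_opensToward {s : ℝ} (hs : s ≠ 0) :
    ∃ K ∈ P.bricks, p ∈ box K.1 K.2 ∧ K.1 i < p i ∧ p i < K.2 i ∧
      OpensToward K p j σ ∧ OpensToward K p 2 s := by
  obtain ⟨K, hK, hpK, hKi, hKj, hK2⟩ := (hcone 1 σ s).1 (.inl (mul_self_nonneg σ))
  obtain ⟨K', hK', hpK', hK'i, -, hK'2⟩ := (hcone (-1) σ s).1 (.inl (mul_self_nonneg σ))
  obtain rfl := P.brick_eq_of_opensToward_vertical hK' hK hpK' hpK hs hK'2 hK2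
  exact ⟨K', hK', hpK', hK'i.1 (by norm_num), hKi.2 one_pos, hKj, hK2⟩

lemma not_exists_brick_opensToward_neg (hσ : σ ≠ 0) (hτ : τ ≠ 0) :
    ¬ ∃ K ∈ P.bricks, p ∈ box K.1 K.2 ∧ OpensToward K p j (-σ) ∧ OpensToward K p 2 (-τ) := by
  rintro ⟨K, hK, hpK, hKj, hK2⟩
  have hσσ := mul_self_pos.2 hσ
  have hττ := mul_self_pos.2 hτ
  rcases (hcone 0 (-σ) (-τ)).2 ⟨K, hK, hpK, opensToward_zero K p i, hKj, hK2⟩ with h | h <;>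
    nlinarith

/-- Such a brick would be the only brick through `p`, making the cone at `p` convex. -/
lemma not_bottom_lt_lt_top (hσ : σ ≠ 0) (hτ : τ ≠ 0) {K : Pt × Pt} (hK : K ∈ P.bricks)
    (hpK : p ∈ box K.1 K.2) (hbot : K.1 2 < p 2) (htop : p 2 < K.2 2) : False := by
  obtain ⟨W, hW, hpW, -, hWj, -⟩ := (hcone 0 (-σ) τ).1 (.inr (mul_self_nonneg τ))
  have hWK : W = K := by
    rcases (hpW 2).1.lt_or_eq with h | h
    · exact P.brick_eq_of_bottom_lt hW hK hpW hpK h hbot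
    · exact P.brick_eq_of_lt_top hW hK hpW hpK (h ▸ P.bricks_proper W hW 2) htop
  subst hWK
  exact not_exists_brick_opensToward_neg hcone hσ hτ
    ⟨W, hW, hpW, hWj, opensToward_of_lt_of_lt hbot htop _⟩

lemma sup_eq_or_inf_eq (hσ : σ ≠ 0) (hτ : τ ≠ 0) {B C : Pt × Pt} (hB : B ∈ P.bricks)
    (hC : C ∈ P.bricks) (hpB : p ∈ box B.1 B.2) (hpC : p ∈ box C.1 C.2)
    (hBbot : B.1 2 < p 2) (hCtop : p 2 < C.2 2) :
    (B.1 ⊔ C.1) j = p j ∨ (B.2 ⊓ C.2) j = p j := by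
  by_contra! h
  simp only [Pi.sup_apply, Pi.inf_apply] at h
  obtain ⟨hB1, hC1⟩ := max_lt_iff.1 ((max_le (hpB j).1 (hpC j).1).lt_of_ne h.1)
  obtain ⟨hB2, hC2⟩ := lt_min_iff.1 ((le_min (hpB j).2 (hpC j).2).lt_of_ne' h.2)
  apply not_exists_brick_opensToward_neg hcone hσ hτ
  rcases hτ.lt_or_gt with hτ | hτ
  · exact ⟨C, hC, hpC, opensToward_of_lt_of_lt hC1 hC2 _,
      ⟨fun h ↦ by linarith, fun _ ↦ hCtop⟩⟩
  · exact ⟨B, hB, hpB, opensToward_of_lt_of_lt hB1 hB2 _,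
      ⟨fun _ ↦ hBbot, fun h ↦ by linarith⟩⟩

end ReflexCone

lemma exists_bricks_of_reflexEdgePoint {p : Pt} {i : Fin 3} (hi : i ≠ 2)
    (hp : ReflexEdgePoint P.carrier p i) :
    ∃ B ∈ P.bricks, ∃ B' ∈ P.bricks, ∃ j, j ≠ i ∧ j ≠ 2 ∧
      p ∈ box B.1 B.2 ∧ p ∈ box B'.1 B'.2 ∧ B.2 2 = p 2 ∧ B'.1 2 = p 2 ∧
      B.1 i < p i ∧ p i < B.2 i ∧ B'.1 i < p i ∧ p i < B'.2 i ∧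
      (B.1 ⊔ B'.1) j < (B.2 ⊓ B'.2) j ∧ ((B.1 ⊔ B'.1) j = p j ∨ (B.2 ⊓ B'.2) j = p j) := by
  obtain ⟨j, hji, hj2, σ, τ, hσ, hτ, hcone⟩ := exists_reflexCone hi hp
  obtain ⟨B, hB, hpB, hBi₁, hBi₂, hBj, hB2⟩ :=
    exists_brick_opensToward hcone (show (-1 : ℝ) ≠ 0 by norm_num)
  obtain ⟨B', hB', hpB', hB'i₁, hB'i₂, hB'j, hB'2⟩ :=
    exists_brick_opensToward hcone one_ne_zero
  have hBbot : B.1 2 < p 2 := hB2.1 (by norm_num)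
  have hB'top : p 2 < B'.2 2 := hB'2.2 one_pos
  refine ⟨B, hB, B', hB', j, hji, hj2, hpB, hpB', ?_, ?_, hBi₁, hBi₂, hB'i₁, hB'i₂,
    sup_lt_inf_of_opensToward hσ hpB hpB' hBj hB'j,
    sup_eq_or_inf_eq hcone hσ hτ hB hB' hpB hpB' hBbot hB'top⟩
  · exact le_antisymm (not_lt.1 (not_bottom_lt_lt_top hcone hσ hτ hB hpB hBbot)) (hpB 2).2
  · exact le_antisymm (hpB' 2).1
      (not_lt.1 fun h ↦ not_bottom_lt_lt_top hcone hσ hτ hB' hpB' h hB'top)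

lemma AttachedAbove.isContactRect {B B' : Pt × Pt} (h : P.AttachedAbove B B') :
    P.IsContactRect (contactRect B B') := by
  obtain ⟨-, -, -, -, R, hR, hRbox⟩ := id h
  have hbox := hRbox.trans (box_contactRect B B').symm
  rw [box_eq_Icc, box_eq_Icc, Icc_eq_Icc_iff hR.le] at hbox
  obtain rfl : R = contactRect B B' := Prod.ext hbox.1 hbox.2
  exact ⟨hR, B, B', h, hRbox⟩

lemma AttachedAbove.eq_of_mem {B B' C C' : Pt × Pt} (hB : P.AttachedAbove B B')
    (hC : P.AttachedAbove C C') {x : Pt} (hxB : x ∈ box B.1 B.2 ∩ box B'.1 B'.2)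
    (hxC : x ∈ box C.1 C.2 ∩ box C'.1 C'.2) : B = C ∧ B' = C' :=
  P.eq_and_eq_of_mem_inter hB.1 hB.2.1 hC.1 hC.2.1 hB.2.2.2.1 hC.2.2.2.1 hxB hxC

/-- The two bricks found at a reflex edge point `q` are the only ones through `q` that meet along
the plane of `q`, so any such pair is strictly wider than `q` in the direction of the edge. -/
lemma lt_apply_lt_of_reflexEdgePoint {q : Pt} {i : Fin 3} (hi : i ≠ 2)
    (hq : ReflexEdgePoint P.carrier q i) {B B' : Pt × Pt} (hB : B ∈ P.bricks)
    (hB' : B' ∈ P.bricks) (hBB' : B.2 2 = B'.1 2) (hqB : q ∈ box B.1 B.2 ∩ box B'.1 B'.2) :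
    (B.1 ⊔ B'.1) i < q i ∧ q i < (B.2 ⊓ B'.2) i := by
  obtain ⟨C, hC, C', hC', -, -, -, hqC, hqC', hC2, hC'2, hCi₁, hCi₂, hC'i₁, hC'i₂, -⟩ :=
    exists_bricks_of_reflexEdgePoint hi hq
  obtain ⟨rfl, rfl⟩ :=
    P.eq_and_eq_of_mem_inter hC hC' hB hB' (hC2.trans hC'2.symm) hBB' ⟨hqC, hqC'⟩ hqB
  exact ⟨max_lt hCi₁ hC'i₁, lt_min hCi₂ hC'i₂⟩

lemma exists_attachedAbove_seg_subset_rectBoundary {e : Pt × Pt} (he : e ∈ P.reflexEdges) :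
    ∃ B B', P.AttachedAbove B B' ∧ seg e ⊆ rectBoundary (contactRect B B') := by
  obtain ⟨i, hoff, hpts⟩ := P.edges_classified e (P.reflex_subset he)
  have hreflex : ∀ q ∈ openSegment ℝ e.1 e.2, ReflexEdgePoint P.carrier q i :=
    fun q hq ↦ (hpts q hq).1 he
  have hi : i ≠ 2 := by
    rintro rfl
    exact P.edges_nondegenerate e (P.reflex_subset he) <| funext fun m ↦
      if hm : m = 2 then hm ▸ P.reflex_horizontal e he else hoff m hm
  have hp : midpoint ℝ e.1 e.2 ∈ openSegment ℝ e.1 e.2 := midpoint_mem_openSegment _ _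
  set p := midpoint ℝ e.1 e.2
  obtain ⟨B, hB, B', hB', j, hji, hj2, hpB, hpB', hB2, hB'2, hBi₁, hBi₂, hB'i₁, hB'i₂, hjlt,
    hjside⟩ := exists_bricks_of_reflexEdgePoint hi (hreflex p hp)
  have hBB' : B.2 2 = B'.1 2 := hB2.trans hB'2.symm
  set R := contactRect B B'
  have hpR : p ∈ box R.1 R.2 := by rw [box_contactRect]; exact ⟨hpB, hpB'⟩
  have hsegR : seg e ⊆ box R.1 R.2 :=
    segment_subset_box_of_forall_mem_box_imp hoff hp hpR fun q hq hqR ↦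
      lt_apply_lt_of_reflexEdgePoint hi (hreflex q hq) hB hB' hBB' (box_contactRect B B' ▸ hqR)
  have hR2 : R.1 2 = R.2 2 := by
    refine le_antisymm ((hpR 2).1.trans (hpR 2).2) ?_
    calc R.2 2 ≤ B.2 2 := (inf_le_left : B.2 ⊓ B'.2 ≤ B.2) 2
      _ = B'.1 2 := hBB'
      _ ≤ R.1 2 := (le_sup_right : B'.1 ≤ B.1 ⊔ B'.1) 2
  have hRlt : ∀ m ≠ 2, R.1 m < R.2 m := fun m hm ↦ by
    rcases eq_or_eq_or_eq_two hi hj2 hji m with rfl | rfl | rfl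
    exacts [(max_lt hBi₁ hB'i₁).trans (lt_min hBi₂ hB'i₂), hjlt, absurd rfl hm]
  have hR : IsHorizRect R := ⟨hRlt 0 (by decide), hRlt 1 (by decide), hR2⟩
  have hne : B ≠ B' := by
    rintro rfl
    exact (P.bricks_proper B hB 2).ne hBB'.symm
  refine ⟨B, B', ⟨hB, hB', hne, hBB', R, hR, box_contactRect B B'⟩,
    fun x hx ↦ mem_rectBoundary_of_mem_box hR2 (hsegR hx) hj2 ?_⟩
  rw [apply_eq_of_mem_segment hx (hoff j hji),
    ← apply_eq_of_mem_segment (openSegment_subset_segment ℝ _ _ hp) (hoff j hji)]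
  exact hjside.imp Eq.symm Eq.symm

variable (P : TwoReflexPolyhedron)

open Classical in
def attachedPairs : Finset ((Pt × Pt) × (Pt × Pt)) :=
  (P.bricks ×ˢ P.bricks).filter fun q ↦ P.AttachedAbove q.1 q.2

variable {P}

lemma mem_attachedPairs {q : (Pt × Pt) × (Pt × Pt)} :
    q ∈ P.attachedPairs ↔ P.AttachedAbove q.1 q.2 := by
  simp only [attachedPairs, Finset.mem_filter, Finset.mem_product, and_iff_right_iff_imp]
  exact fun h ↦ ⟨h.1, h.2.1⟩

lemma even_card_attachedPairs {base : Pt × Pt} (h : P.CastleOn ↑P.bricks base) :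
    Even P.attachedPairs.card := by
  classical
  rw [attachedPairs, Finset.card_filter, Finset.sum_product]
  refine Finset.even_sum _ fun B hB ↦ ?_
  rw [← Finset.card_filter, ← Set.ncard_coe_finset, Finset.coe_filter]
  have hB := h.2.2.1 B hB
  simp only [Finset.mem_coe] at hB ⊢
  rcases hB with hB | hB <;> rw [hB]
  exacts [Even.zero, even_two]

lemma card_attachedPairs_eq (h : P.IsStack) : P.attachedPairs.card = P.reflexEdges.card := by
  classical
  rw [← mul_one P.attachedPairs.card, ← mul_one P.reflexEdges.card]
  refine Finset.card_mul_eq_card_mul (fun q e ↦ seg e ⊆ rectBoundary (contactRect q.1 q.2))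
    (fun q hq ↦ ?_) (fun e he ↦ ?_)
  · have hq := (h _ (mem_attachedPairs.1 hq).isContactRect).2
    rwa [← Set.ncard_coe_finset, Finset.bipartiteAbove, Finset.coe_filter]
  · obtain ⟨B, B', hBB', hsub⟩ := exists_attachedAbove_seg_subset_rectBoundary he
    refine le_antisymm (Finset.card_le_one.2 fun q hq q' hq' ↦ ?_)
      (Finset.card_pos.2 ⟨(B, B'), ?_⟩)
    · simp only [Finset.mem_bipartiteBelow, mem_attachedPairs] at hq hq'
      have hx : e.1 ∈ seg e := left_mem_segment ℝ _ _
      have hmem : ∀ q : (Pt × Pt) × (Pt × Pt), P.AttachedAbove q.1 q.2 →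
          seg e ⊆ rectBoundary (contactRect q.1 q.2) → e.1 ∈ box q.1.1 q.1.2 ∩ box q.2.1 q.2.2 :=
        fun q hq hsub ↦ box_contactRect q.1 q.2 ▸
          rectBoundary_subset_box hq.isContactRect.1.le (hsub hx)
      obtain ⟨h₁, h₂⟩ := hq.1.eq_of_mem hq'.1 (hmem q hq.1 hq.2) (hmem q' hq'.1 hq'.2)
      exact Prod.ext h₁ h₂
    · simpa [Finset.mem_bipartiteBelow, mem_attachedPairs] using ⟨hBB', hsub⟩

end TwoReflexPolyhedron

/-- Every castle has an even number of reflex edges. -/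
theorem castle_even_reflex (P : TwoReflexPolyhedron) (hcastle : P.IsCastle) :
    Even P.reflexEdges.card := by
  obtain ⟨hstack, base, hcastle⟩ := hcastle
  rw [← TwoReflexPolyhedron.card_attachedPairs_eq hstack]
  exact TwoReflexPolyhedron.even_card_attachedPairs hcastle
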